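/- Fix complex constants α0, α1 and t ∈ ℂ with t ≠ 0. The transition map r₂ : (x, y, z) ↦ (x₂, y₂, z₂) with x₂ = x + z/2, y₂ = −((y + (2/t)x − 1/t − (4(α1−1)α1 − 7)/(4t²))·z − (2(2α1−3)t·x + 2(α0+1)t + 4α1² − 8α1 + 3)/t³ + ((tz+4)/(4t))·z²)·z, z₂ = 1/z, defined on {(x,y,z) ∈ ℂ³ : z ≠ 0}, is differentiable and the determinant of its Jacobian matrix of partial derivatives with respect to (x, y, z) is identically equal to 1; in particular r₂ preserves the 3-form, dx₂ ∧ dy₂ ∧ dz₂ = dx ∧ dy ∧ dz. -/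

import Mathlib

/-- First component of the transition map `r₂`: `x₂ = x + z/2`. -/
noncomputable def r2f1 (α0 α1 t x y z : ℂ) : ℂ := x + z / 2

/-- Second component of the transition map `r₂`. -/
noncomputable def r2f2 (α0 α1 t x y z : ℂ) : ℂ :=
  -((y + (2 / t) * x - 1 / t - (4 * (α1 - 1) * α1 - 7) / (4 * t ^ 2)) * z
      - (2 * (2 * α1 - 3) * t * x + 2 * (α0 + 1) * t + 4 * α1 ^ 2 - 8 * α1 + 3) / t ^ 3
      + ((t * z + 4) / (4 * t)) * z ^ 2) * z

/-- Third component of the transition map `r₂`: `z₂ = 1/z`. -/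
noncomputable def r2f3 (α0 α1 t x y z : ℂ) : ℂ := 1 / z

/-!
Neither `x₂` nor `z₂` depends on `y`, `z₂` depends on `z` only, and `y₂` is affine in `y` with
slope `-z²`. So the Jacobian has the shape `!![1, 0, *; *, -z², *; 0, 0, -1/z²]`, and its
determinant is `1 · (-z²) · (-1/z²) = 1` whatever the starred entries, which carry all the
complicated terms of `y₂`.
-/

theorem Matrix.det_fin_three_of_zero_entries {R : Type*} [CommRing R] (a b c d e f : R) :
    !![a, 0, b; c, d, e; 0, 0, f].det = a * d * f := by
  simp [Matrix.det_fin_three]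

lemma r2f2_eq_affine_in_y (α0 α1 t x y z : ℂ) :
    r2f2 α0 α1 t x y z = -z ^ 2 * y + r2f2 α0 α1 t x 0 z := by
  simp only [r2f2]; ring

lemma deriv_r2f1_x (α0 α1 t y z x : ℂ) : deriv (fun s => r2f1 α0 α1 t s y z) x = 1 := by
  simp [r2f1]

lemma deriv_r2f2_y (α0 α1 t x z y : ℂ) : deriv (fun s => r2f2 α0 α1 t x s z) y = -z ^ 2 := by
  have h : (fun s => r2f2 α0 α1 t x s z) = fun s => -z ^ 2 * s + r2f2 α0 α1 t x 0 z :=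
    funext fun s => r2f2_eq_affine_in_y α0 α1 t x s z
  simp [h]

lemma deriv_r2f3_z (α0 α1 t x y z : ℂ) : deriv (fun s => r2f3 α0 α1 t x y s) z = -(z ^ 2)⁻¹ := by
  simp [r2f3]

lemma differentiableAt_r2 (α0 α1 t x y z : ℂ) (hz : z ≠ 0) :
    DifferentiableAt ℂ (fun P : ℂ × ℂ × ℂ =>
          (r2f1 α0 α1 t P.1 P.2.1 P.2.2,
           r2f2 α0 α1 t P.1 P.2.1 P.2.2,
           r2f3 α0 α1 t P.1 P.2.1 P.2.2)) (x, y, z) := by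
  simp only [r2f1, r2f2, r2f3]
  fun_prop (disch := exact hz)

theorem r2_preserves_three_form_general (α0 α1 t : ℂ) :
    ∀ x y z : ℂ, z ≠ 0 →
      DifferentiableAt ℂ (fun P : ℂ × ℂ × ℂ =>
          (r2f1 α0 α1 t P.1 P.2.1 P.2.2,
           r2f2 α0 α1 t P.1 P.2.1 P.2.2,
           r2f3 α0 α1 t P.1 P.2.1 P.2.2)) (x, y, z) ∧
      Matrix.det
        !![deriv (fun s => r2f1 α0 α1 t s y z) x,
           deriv (fun s => r2f1 α0 α1 t x s z) y,
           deriv (fun s => r2f1 α0 α1 t x y s) z;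
           deriv (fun s => r2f2 α0 α1 t s y z) x,
           deriv (fun s => r2f2 α0 α1 t x s z) y,
           deriv (fun s => r2f2 α0 α1 t x y s) z;
           deriv (fun s => r2f3 α0 α1 t s y z) x,
           deriv (fun s => r2f3 α0 α1 t x s z) y,
           deriv (fun s => r2f3 α0 α1 t x y s) z] = 1 := by
  intro x y z hz
  refine ⟨differentiableAt_r2 α0 α1 t x y z hz, ?_⟩
  rw [deriv_r2f1_x, deriv_r2f2_y, deriv_r2f3_z]
  simp only [r2f1, r2f3, deriv_const]
  rw [Matrix.det_fin_three_of_zero_entries]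
  field_simp

/-- The transition map `r₂` is differentiable on `{z ≠ 0}` and its Jacobian
determinant is identically `1`; in particular it preserves the 3-form
`dx ∧ dy ∧ dz`. -/
theorem r2_preserves_three_form (α0 α1 t : ℂ) (ht : t ≠ 0) :
    ∀ x y z : ℂ, z ≠ 0 →
      DifferentiableAt ℂ (fun P : ℂ × ℂ × ℂ =>
          (r2f1 α0 α1 t P.1 P.2.1 P.2.2,
           r2f2 α0 α1 t P.1 P.2.1 P.2.2,
           r2f3 α0 α1 t P.1 P.2.1 P.2.2)) (x, y, z) ∧
      Matrix.det
        !![deriv (fun s => r2f1 α0 α1 t s y z) x,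
           deriv (fun s => r2f1 α0 α1 t x s z) y,
           deriv (fun s => r2f1 α0 α1 t x y s) z;
           deriv (fun s => r2f2 α0 α1 t s y z) x,
           deriv (fun s => r2f2 α0 α1 t x s z) y,
           deriv (fun s => r2f2 α0 α1 t x y s) z;
           deriv (fun s => r2f3 α0 α1 t s y z) x,
           deriv (fun s => r2f3 α0 α1 t x s z) y,
           deriv (fun s => r2f3 α0 α1 t x y s) z] = 1 :=
  r2_preserves_three_form_general α0 α1 t
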